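/- Let t > 0, γ > 0, r > 0, p₁ < 1 with p₁ ≠ 0, λ > 0 and c̄ > 0. Let W_t be a Gaussian random variable with mean 0 and variance t, set Z := exp(−(r + γ²/2)t − γ W_t) and define the optimal consumption c* := max((λZ)^(1/(p₁−1)), c̄). Then, with a := c̄^(p₁−1)/λ, the budget identity E[Z · c*] = λ^(1/(p₁−1)) · ξ(t, 0, 1, p₁/(p₁−1), 0, a) + c̄ · ξ(t, 0, 1, 1, a, +∞) holds. -/

import Mathlib

/-!
On `{Z ≤ a}` the optimal consumption is `(λZ)^(1/(p₁-1))`, so `Z c* = λ^(1/(p₁-1)) Z^(p₁/(p₁-1))`;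
on `{Z ≥ a}` it is `c̄`, so `Z c* = c̄ Z`. Both pieces are truncated moments `E[Z^k; Z ∈ I]`.
Since `Z^k` is the exponential of an affine function of `W_t` and `{Z < a}` is a half-line in
`W_t`, exponential tilting (`e^(θw)` times the `N(0, t)` density is `e^(θ²t/2)` times the
`N(θt, t)` density) turns each of them into a Gaussian tail probability, i.e. the `Φ`-terms of `ξ`.
-/

open MeasureTheory ProbabilityTheory

open scoped ENNReal

/-- Cumulative distribution function of the standard normal distribution. -/
noncomputable def Phi (x : ℝ) : ℝ := ((gaussianReal 0 1) (Set.Iic x)).toReal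

/-- `Φ(d̄(x) + kγ√(s − t))`, where `d̄(x) = (ln(z/x) − (r + γ²/2)(s − t)) / (γ √(s − t))`
for `x ∈ (0, ∞)`, with the conventions `Φ(d̄(0) + u) = 1` and `Φ(d̄(∞) + u) = 0`. -/
noncomputable def PhiDbar (γ r s t z k : ℝ) (x : ℝ≥0∞) : ℝ :=
  if x = 0 then 1
  else if x = ⊤ then 0
  else Phi ((Real.log (z / x.toReal) - (r + γ ^ 2 / 2) * (s - t)) / (γ * Real.sqrt (s - t))
      + k * γ * Real.sqrt (s - t))

/-- `ξ(s, t, z, k, a, b; γ, r)`. -/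
noncomputable def xi (γ r s t z k : ℝ) (a b : ℝ≥0∞) : ℝ :=
  z ^ k * Real.exp (-k * (r + γ ^ 2 / 2) * (s - t) + k ^ 2 * γ ^ 2 / 2 * (s - t)) *
    (PhiDbar γ r s t z k a - PhiDbar γ r s t z k b) * (if a < b then 1 else 0)

/-- `h(t₁, t₂) = exp((μ_F − σ_F²/2 − σ_F r/γ − σ_F γ/2)(t₂ − t₁))`. -/
noncomputable def hF (γ r μF σF t₁ t₂ : ℝ) : ℝ :=
  Real.exp ((μF - σF ^ 2 / 2 - σF * r / γ - σF * γ / 2) * (t₂ - t₁))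

open scoped NNReal
open Set

section Gaussian

variable {m : ℝ} {v : ℝ≥0}

lemma exp_mul_mul_gaussianPDFReal (hv : v ≠ 0) (θ w : ℝ) :
    Real.exp (θ * w) * gaussianPDFReal m v w
      = Real.exp (θ * m + v * θ ^ 2 / 2) * gaussianPDFReal (m + v * θ) v w := by
  have hv' : (v : ℝ) ≠ 0 := NNReal.coe_ne_zero.mpr hv
  simp only [gaussianPDFReal]
  rw [mul_left_comm, mul_left_comm (Real.exp _), ← Real.exp_add, ← Real.exp_add]
  congr 2
  field_simp
  ring

lemma setIntegral_exp_mul_gaussianReal (hv : v ≠ 0) (θ : ℝ) {s : Set ℝ} (hs : MeasurableSet s) :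
    ∫ w in s, Real.exp (θ * w) ∂gaussianReal m v
      = Real.exp (θ * m + v * θ ^ 2 / 2) * (gaussianReal (m + v * θ) v s).toReal := by
  rw [gaussianReal_apply_eq_integral _ hv, ENNReal.toReal_ofReal
      (setIntegral_nonneg hs fun _ _ ↦ gaussianPDFReal_nonneg _ _ _),
    ← integral_const_mul, gaussianReal_of_var_ne_zero _ hv,
    setIntegral_withDensity_eq_setIntegral_toReal_smul (measurable_gaussianPDF _ _)
      (ae_of_all _ fun _ ↦ gaussianPDF_lt_top) _ hs]
  simp only [toReal_gaussianPDF, smul_eq_mul, mul_comm (gaussianPDFReal m v _),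
    exp_mul_mul_gaussianPDFReal hv]

lemma gaussianReal_Iic_toReal (hv : v ≠ 0) (x : ℝ) :
    (gaussianReal m v (Iic x)).toReal = Phi ((x - m) / Real.sqrt v) := by
  have hsv : 0 < Real.sqrt v := Real.sqrt_pos.mpr (NNReal.coe_pos.mpr (pos_iff_ne_zero.mpr hv))
  have hstd : ((gaussianReal m v).map (· - m)).map (· / Real.sqrt v) = gaussianReal 0 1 := by
    rw [gaussianReal_map_sub_const, gaussianReal_map_div_const, sub_self, zero_div]
    congr
    ext
    simp [hv]
  rw [Phi, ← hstd, Measure.map_map (by fun_prop) (by fun_prop),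
    Measure.map_apply (by fun_prop) measurableSet_Iic]
  congr 2
  ext y
  simp [div_le_div_iff_of_pos_right hsv]

lemma gaussianReal_Ioi_toReal (hv : v ≠ 0) (x : ℝ) :
    (gaussianReal m v (Ioi x)).toReal = 1 - Phi ((x - m) / Real.sqrt v) := by
  rw [← compl_Iic, prob_compl_eq_one_sub measurableSet_Iic,
    ENNReal.toReal_sub_of_le prob_le_one ENNReal.one_ne_top, ENNReal.toReal_one,
    gaussianReal_Iic_toReal hv]

end Gaussian

/-- `z Z_{t₀,s}` evaluated at `W_s - W_{t₀} = w`, where `τ = s - t₀`. -/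
noncomputable def statePriceDensity (γ r τ z w : ℝ) : ℝ :=
  z * Real.exp (-(r + γ ^ 2 / 2) * τ - γ * w)

noncomputable def dbar (γ r s t z x : ℝ) : ℝ :=
  (Real.log (z / x) - (r + γ ^ 2 / 2) * (s - t)) / (γ * Real.sqrt (s - t))

section StatePriceDensity

variable {γ r s t₀ z : ℝ}

lemma PhiDbar_ofReal {a : ℝ} (ha : 0 < a) (k : ℝ) :
    PhiDbar γ r s t₀ z k (ENNReal.ofReal a)
      = Phi (dbar γ r s t₀ z a + k * γ * Real.sqrt (s - t₀)) := by
  simp [PhiDbar, dbar, ha, ha.le]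

lemma continuous_statePriceDensity (γ r τ z : ℝ) : Continuous (statePriceDensity γ r τ z) := by
  unfold statePriceDensity
  fun_prop

lemma statePriceDensity_rpow {τ : ℝ} (hz : 0 < z) (k w : ℝ) :
    statePriceDensity γ r τ z w ^ k
      = z ^ k * Real.exp (-k * (r + γ ^ 2 / 2) * τ) * Real.exp (-(k * γ) * w) := by
  rw [statePriceDensity, Real.mul_rpow hz.le (Real.exp_pos _).le, ← Real.exp_mul, mul_assoc,
    ← Real.exp_add]
  ring_nf

lemma integrable_statePriceDensity_rpow {τ m : ℝ} {v : ℝ≥0} (hz : 0 < z) (k : ℝ) :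
    Integrable (fun w ↦ statePriceDensity γ r τ z w ^ k) (gaussianReal m v) := by
  simp_rw [statePriceDensity_rpow hz]
  exact (integrable_exp_mul_gaussianReal _).const_mul _

lemma statePriceDensity_lt_iff (hγ : 0 < γ) (hst : t₀ < s) (hz : 0 < z) {a : ℝ} (ha : 0 < a)
    (w : ℝ) :
    statePriceDensity γ r (s - t₀) z w < a ↔ Real.sqrt (s - t₀) * dbar γ r s t₀ z a < w := by
  have hsq : 0 < Real.sqrt (s - t₀) := Real.sqrt_pos.mpr (sub_pos.mpr hst)
  have hthreshold : Real.sqrt (s - t₀) * dbar γ r s t₀ z a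
      = (Real.log z - Real.log a - (r + γ ^ 2 / 2) * (s - t₀)) / γ := by
    rw [dbar, Real.log_div hz.ne' ha.ne']
    field_simp
  rw [hthreshold, div_lt_iff₀' hγ, statePriceDensity,
    ← Real.log_lt_log_iff (mul_pos hz (Real.exp_pos _)) ha,
    Real.log_mul hz.ne' (Real.exp_pos _).ne', Real.log_exp]
  constructor <;> intro h <;> linarith

end StatePriceDensity

section TruncatedMoments

variable {γ r s t₀ z a : ℝ}

lemma setIntegral_statePriceDensity_rpow (hst : t₀ < s) (hz : 0 < z) (k : ℝ) {S : Set ℝ}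
    (hS : MeasurableSet S) :
    ∫ w in S, statePriceDensity γ r (s - t₀) z w ^ k ∂gaussianReal 0 (s - t₀).toNNReal
      = z ^ k * Real.exp (-k * (r + γ ^ 2 / 2) * (s - t₀) + k ^ 2 * γ ^ 2 / 2 * (s - t₀))
        * (gaussianReal (-(k * γ) * (s - t₀)) (s - t₀).toNNReal S).toReal := by
  have hτ : 0 < s - t₀ := sub_pos.mpr hst
  simp_rw [statePriceDensity_rpow hz]
  rw [integral_const_mul, setIntegral_exp_mul_gaussianReal (by simpa using hτ) _ hS,
    Real.coe_toNNReal _ hτ.le, Real.exp_add,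
    show (0 : ℝ) + (s - t₀) * -(k * γ) = -(k * γ) * (s - t₀) by ring,
    show (s - t₀) * (-(k * γ)) ^ 2 / 2 = k ^ 2 * γ ^ 2 / 2 * (s - t₀) by ring,
    mul_zero, Real.exp_zero, one_mul, Real.exp_add]
  ring

lemma sqrt_mul_sub_neg_mul_div_sqrt {τ : ℝ} (hτ : 0 < τ) (x y : ℝ) :
    (Real.sqrt τ * x - -y * τ) / Real.sqrt (τ.toNNReal) = x + y * Real.sqrt τ := by
  have hsq : Real.sqrt τ * Real.sqrt τ = τ := Real.mul_self_sqrt hτ.le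
  have hsq_pos : 0 < Real.sqrt τ := Real.sqrt_pos.mpr hτ
  rw [Real.coe_toNNReal _ hτ.le]
  field_simp
  linear_combination -y * hsq

lemma setIntegral_statePriceDensity_rpow_lt (hγ : 0 < γ) (hst : t₀ < s) (hz : 0 < z)
    (ha : 0 < a) (k : ℝ) :
    ∫ w in {w | statePriceDensity γ r (s - t₀) z w < a}, statePriceDensity γ r (s - t₀) z w ^ k
        ∂gaussianReal 0 (s - t₀).toNNReal
      = xi γ r s t₀ z k 0 (ENNReal.ofReal a) := by
  have hset : {w | statePriceDensity γ r (s - t₀) z w < a}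
      = Ioi (Real.sqrt (s - t₀) * dbar γ r s t₀ z a) :=
    Set.ext (statePriceDensity_lt_iff hγ hst hz ha)
  rw [hset, setIntegral_statePriceDensity_rpow hst hz k measurableSet_Ioi,
    gaussianReal_Ioi_toReal (by simpa using hst),
    sqrt_mul_sub_neg_mul_div_sqrt (sub_pos.mpr hst), xi, PhiDbar_ofReal ha]
  simp [PhiDbar, ha]

lemma setIntegral_statePriceDensity_rpow_ge (hγ : 0 < γ) (hst : t₀ < s) (hz : 0 < z)
    (ha : 0 < a) (k : ℝ) :
    ∫ w in {w | a ≤ statePriceDensity γ r (s - t₀) z w}, statePriceDensity γ r (s - t₀) z w ^ k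
        ∂gaussianReal 0 (s - t₀).toNNReal
      = xi γ r s t₀ z k (ENNReal.ofReal a) ⊤ := by
  have hset : {w | a ≤ statePriceDensity γ r (s - t₀) z w}
      = Iic (Real.sqrt (s - t₀) * dbar γ r s t₀ z a) :=
    Set.ext fun w ↦ by simpa using (statePriceDensity_lt_iff hγ hst hz ha w).not
  rw [hset, setIntegral_statePriceDensity_rpow hst hz k measurableSet_Iic,
    gaussianReal_Iic_toReal (by simpa using hst),
    sqrt_mul_sub_neg_mul_div_sqrt (sub_pos.mpr hst), xi, PhiDbar_ofReal ha]
  simp [PhiDbar]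

end TruncatedMoments

section OptimalConsumption

variable {p lam c x : ℝ}

lemma rpow_threshold (hp : p < 1) (hlam : 0 < lam) (hc : 0 < c) :
    (lam * (c ^ (p - 1) / lam)) ^ (1 / (p - 1)) = c := by
  rw [mul_div_cancel₀ _ hlam.ne', ← Real.rpow_mul hc.le, mul_one_div_cancel (by linarith),
    Real.rpow_one]

lemma le_rpow_of_le_threshold (hp : p < 1) (hlam : 0 < lam) (hc : 0 < c) (hx : 0 < x)
    (hxa : x ≤ c ^ (p - 1) / lam) : c ≤ (lam * x) ^ (1 / (p - 1)) := by
  calc c = (lam * (c ^ (p - 1) / lam)) ^ (1 / (p - 1)) := (rpow_threshold hp hlam hc).symm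
    _ ≤ (lam * x) ^ (1 / (p - 1)) :=
      Real.rpow_le_rpow_of_nonpos (by positivity) (by gcongr)
        (one_div_nonpos.mpr (by linarith))

lemma rpow_le_of_threshold_le (hp : p < 1) (hlam : 0 < lam) (hc : 0 < c)
    (hxa : c ^ (p - 1) / lam ≤ x) : (lam * x) ^ (1 / (p - 1)) ≤ c := by
  calc (lam * x) ^ (1 / (p - 1)) ≤ (lam * (c ^ (p - 1) / lam)) ^ (1 / (p - 1)) :=
      Real.rpow_le_rpow_of_nonpos (by positivity) (by gcongr)
        (one_div_nonpos.mpr (by linarith))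
    _ = c := rpow_threshold hp hlam hc

lemma mul_mul_rpow_one_div_sub_one (hp : p ≠ 1) (hlam : 0 < lam) (hx : 0 < x) :
    x * (lam * x) ^ (1 / (p - 1)) = lam ^ (1 / (p - 1)) * x ^ (p / (p - 1)) := by
  have hp' : p - 1 ≠ 0 := sub_ne_zero.mpr hp
  rw [Real.mul_rpow hlam.le hx.le, mul_left_comm]
  nth_rewrite 1 [← Real.rpow_one x]
  rw [← Real.rpow_add hx]
  congr 2
  field_simp
  ring

lemma mul_max_rpow_eq_max (hp : p ≠ 1) (hlam : 0 < lam) (hx : 0 < x) :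
    x * max ((lam * x) ^ (1 / (p - 1))) c
      = max (lam ^ (1 / (p - 1)) * x ^ (p / (p - 1))) (c * x) := by
  rw [mul_max_of_nonneg _ _ hx.le, mul_mul_rpow_one_div_sub_one hp hlam hx, mul_comm x c]

lemma mul_max_rpow_of_le_threshold (hp : p < 1) (hlam : 0 < lam) (hc : 0 < c) (hx : 0 < x)
    (hxa : x ≤ c ^ (p - 1) / lam) :
    x * max ((lam * x) ^ (1 / (p - 1))) c = lam ^ (1 / (p - 1)) * x ^ (p / (p - 1)) := by
  rw [max_eq_left (le_rpow_of_le_threshold hp hlam hc hx hxa),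
    mul_mul_rpow_one_div_sub_one hp.ne hlam hx]

lemma mul_max_rpow_of_threshold_le (hp : p < 1) (hlam : 0 < lam) (hc : 0 < c)
    (hxa : c ^ (p - 1) / lam ≤ x) :
    x * max ((lam * x) ^ (1 / (p - 1))) c = c * x ^ (1 : ℝ) := by
  rw [max_eq_right (rpow_le_of_threshold_le hp hlam hc hxa), Real.rpow_one, mul_comm]

end OptimalConsumption

theorem budget_identity_optimal_consumption_general
    (t γ r p₁ lam c : ℝ)
    (ht : 0 < t) (hγ : 0 < γ) (hp : p₁ < 1)
    (hlam : 0 < lam) (hc : 0 < c) :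
    (∫ w, Real.exp (-(r + γ ^ 2 / 2) * t - γ * w) *
        max ((lam * Real.exp (-(r + γ ^ 2 / 2) * t - γ * w)) ^ (1 / (p₁ - 1))) c
        ∂(gaussianReal 0 (Real.toNNReal t)))
      = lam ^ (1 / (p₁ - 1)) *
          xi γ r t 0 1 (p₁ / (p₁ - 1)) 0 (ENNReal.ofReal (c ^ (p₁ - 1) / lam))
        + c * xi γ r t 0 1 1 (ENNReal.ofReal (c ^ (p₁ - 1) / lam)) ⊤ := by
  set a := c ^ (p₁ - 1) / lam
  have ha : 0 < a := by positivity
  set Z := statePriceDensity γ r t 1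
  have hZ_pos : ∀ w, 0 < Z w := fun w ↦ mul_pos one_pos (Real.exp_pos _)
  have hZ : ∀ w, Real.exp (-(r + γ ^ 2 / 2) * t - γ * w) = Z w := fun w ↦ (one_mul _).symm
  have hlow := setIntegral_statePriceDensity_rpow_lt (r := r) hγ ht one_pos ha (p₁ / (p₁ - 1))
  have hhigh := setIntegral_statePriceDensity_rpow_ge (r := r) hγ ht one_pos ha 1
  simp only [sub_zero] at hlow hhigh
  simp_rw [hZ]
  have hint : Integrable (fun w ↦ Z w * max ((lam * Z w) ^ (1 / (p₁ - 1))) c)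
      (gaussianReal 0 t.toNNReal) := by
    simp_rw [mul_max_rpow_eq_max hp.ne hlam (hZ_pos _)]
    exact ((integrable_statePriceDensity_rpow one_pos _).const_mul _).sup
      (by simpa using (integrable_statePriceDensity_rpow one_pos 1).const_mul c)
  have hS : MeasurableSet {w | Z w < a} :=
    measurableSet_lt (continuous_statePriceDensity γ r t 1).measurable measurable_const
  have hcompl : {w | Z w < a}ᶜ = {w | a ≤ Z w} := by
    ext
    simp
  rw [← integral_add_compl hS hint, hcompl, ← hlow, ← hhigh, ← integral_const_mul,
    ← integral_const_mul]
  congr 1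
  · exact setIntegral_congr_fun hS fun w hw ↦
      mul_max_rpow_of_le_threshold hp hlam hc (hZ_pos w) (le_of_lt hw)
  · exact setIntegral_congr_fun (hcompl ▸ hS.compl) fun w hw ↦
      mul_max_rpow_of_threshold_le hp hlam hc hw

theorem budget_identity_optimal_consumption
    (t γ r p₁ lam c : ℝ)
    (ht : 0 < t) (hγ : 0 < γ) (hr : 0 < r) (hp : p₁ < 1) (hp0 : p₁ ≠ 0)
    (hlam : 0 < lam) (hc : 0 < c) :
    (∫ w, Real.exp (-(r + γ ^ 2 / 2) * t - γ * w) *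
        max ((lam * Real.exp (-(r + γ ^ 2 / 2) * t - γ * w)) ^ (1 / (p₁ - 1))) c
        ∂(gaussianReal 0 (Real.toNNReal t)))
      = lam ^ (1 / (p₁ - 1)) *
          xi γ r t 0 1 (p₁ / (p₁ - 1)) 0 (ENNReal.ofReal (c ^ (p₁ - 1) / lam))
        + c * xi γ r t 0 1 1 (ENNReal.ofReal (c ^ (p₁ - 1) / lam)) ⊤ :=
  budget_identity_optimal_consumption_general t γ r p₁ lam c ht hγ hp hlam hc
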